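/- arXiv:1512.02138 — 9 statements merged into one kernel-verified Lean document; each statement's English description precedes it below -/
import Mathlib

section
/- Completeness of SQ-DB-SKY (Theorem 2): Let α be a linear order, m ≥ 1, and D a finite set of tuples in (Fin m → α). A one-ended (SQ) query is a function c : Fin m → Option α; a tuple t matches c if for every attribute i and every v with c i = some v one has t i < v; write D_c for the set of tuples of D matching c. Let f be any selection function that, for every query c with D_c nonempty, picks an element f c ∈ D_c that is not dominated by any element of D_c. Define the set of reachable queries inductively: the everywhere-none query is reachable; and whenever c is reachable and D_c is nonempty, then for every attribute i the query obtained from c by setting its value at i to some ((f c) i) is reachable. Then for every skyline tuple t of D there exists a reachable query c with D_c nonempty and f c = t. -/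
/-- `t'` dominates `t`: `t' ≠ t` and `t'` is at least as good (≤) on every attribute. -/
def Dominates {α : Type*} [LinearOrder α] {m : ℕ} (t' t : Fin m → α) : Prop :=
  t' ≠ t ∧ ∀ i, t' i ≤ t i

/-- `t` matches the one-ended (SQ) query `c`: for every attribute `i` with a specified
bound `c i = some v`, we have `t i < v`. -/
def SQMatches {α : Type*} [LinearOrder α] {m : ℕ} (c : Fin m → Option α) (t : Fin m → α) : Prop :=
  ∀ i v, c i = some v → t i < v

/-- The set of queries reachable by SQ-DB-SKY: the everywhere-`none` query is reachable,
and whenever a reachable query `c` has a nonempty answer set, each of the `m` queries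
obtained by tightening attribute `i` to `(f c) i` is reachable. -/
inductive SQReachable {α : Type*} [LinearOrder α] {m : ℕ}
    (D : Finset (Fin m → α)) (f : (Fin m → Option α) → (Fin m → α)) :
    (Fin m → Option α) → Prop
  | root : SQReachable D f (fun _ => none)
  | child (c : Fin m → Option α) (i : Fin m) :
      SQReachable D f c →
      (∃ t ∈ D, SQMatches c t) →
      SQReachable D f (Function.update c i (some (f c i)))

open Classical in
/-- Completeness of SQ-DB-SKY: every skyline tuple of `D` is returned by some
reachable query. -/
theorem sq_db_sky_complete {α : Type*} [LinearOrder α] {m : ℕ} (hm : 1 ≤ m)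
    (D : Finset (Fin m → α))
    (f : (Fin m → Option α) → (Fin m → α))
    (hf : ∀ c : Fin m → Option α, (∃ t ∈ D, SQMatches c t) →
      f c ∈ D ∧ SQMatches c (f c) ∧ ∀ u ∈ D, SQMatches c u → ¬ Dominates u (f c))
    (t : Fin m → α) (htD : t ∈ D) (hsky : ∀ u ∈ D, ¬ Dominates u t) :
    ∃ c, SQReachable D f c ∧ (∃ u ∈ D, SQMatches c u) ∧ f c = t := by
  classical
  suffices h : ∀ n (c : Fin m → Option α), SQReachable D f c → SQMatches c t →
      (D.filter (fun u => SQMatches c u)).card ≤ n →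
      ∃ c', SQReachable D f c' ∧ (∃ u ∈ D, SQMatches c' u) ∧ f c' = t by
    exact h (D.filter (fun u => SQMatches (fun _ => none) u)).card _ SQReachable.root
      (fun i v hv => by simp at hv) le_rfl
  intro n
  induction n with
  | zero =>
    intro c hc hmt hcard
    exact absurd (Finset.card_eq_zero.mp (Nat.le_zero.mp hcard) ▸
      Finset.mem_filter.mpr ⟨htD, hmt⟩) (by simp)
  | succ n ih =>
    intro c hc hmt hcard
    have hne : ∃ u ∈ D, SQMatches c u := ⟨t, htD, hmt⟩
    obtain ⟨hfD, hfm, _⟩ := hf c hne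
    by_cases heq : f c = t
    · exact ⟨c, hc, hne, heq⟩
    · -- `f c` does not dominate `t`, so some attribute has `t i < f c i`
      have hnd := hsky (f c) hfD
      have : ∃ i, t i < f c i := by
        by_contra h
        push_neg at h
        exact hnd ⟨heq, fun i => le_of_not_gt (fun hlt => absurd hlt (not_lt.mpr (h i)))⟩
      obtain ⟨i, hi⟩ := this
      set c' := Function.update c i (some (f c i)) with hc'
      have hmt' : SQMatches c' t := by
        intro j v hv
        rcases eq_or_ne j i with rfl | hji
        · rw [hc', Function.update_self] at hv
          exact (Option.some_inj.mp hv) ▸ hi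
        · exact hmt j v (by rwa [hc', Function.update_of_ne hji] at hv)
      have hreach' : SQReachable D f c' := SQReachable.child c i hc hne
      have hsub : D.filter (fun u => SQMatches c' u) ⊂ D.filter (fun u => SQMatches c u) := by
        constructor
        · intro u hu
          rw [Finset.mem_filter] at hu ⊢
          refine ⟨hu.1, fun j v hv => ?_⟩
          rcases eq_or_ne j i with rfl | hji
          · exact lt_trans (hu.2 j (f c j) (by rw [hc', Function.update_self])) (hfm j v hv)
          · exact hu.2 j v (by rw [hc', Function.update_of_ne hji]; exact hv)
        · intro h
          have := h (Finset.mem_filter.mpr ⟨hfD, hfm⟩)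
          rw [Finset.mem_filter] at this
          exact lt_irrefl _ (this.2 i (f c i) (by rw [hc', Function.update_self]))
      exact ih c' hreach' hmt' (Nat.lt_succ_iff.mp (lt_of_lt_of_le (Finset.card_lt_card hsub) hcard))
end

section
/- Completeness of RQ-DB-SKY with mutually exclusive branches (Theorem 3): Let α be a linear order, m ≥ 1, and D a finite set of tuples in (Fin m → α). A two-ended (RQ) query is a pair q = (lo, hi) with lo, hi : Fin m → Option α; a tuple t matches q if for every attribute i, whenever lo i = some v then v ≤ t i, and whenever hi i = some w then t i < w; write D_q for the set of tuples of D matching q. Let f be any selection function that, for every query q with D_q nonempty, picks an element f q ∈ D_q that is not dominated by any element of D_q. Define the set of reachable queries inductively: the query with lo and hi everywhere none is reachable; and whenever q = (lo, hi) is reachable and D_q is nonempty, then for each attribute i the i-th child query is reachable, where the i-th child is obtained from q by setting lo at every attribute j < i to some ((f q) j) and setting hi at attribute i to some ((f q) i). Then for every skyline tuple t of D there exists a reachable query q with D_q nonempty and f q = t. -/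
/-- `t` matches the two-ended (RQ) query `(lo, hi)`: for every attribute `i`,
whenever `lo i = some v` then `v ≤ t i`, and whenever `hi i = some w` then `t i < w`. -/
def RQMatches {α : Type*} [LinearOrder α] {m : ℕ}
    (lo hi : Fin m → Option α) (t : Fin m → α) : Prop :=
  ∀ i, (∀ v, lo i = some v → v ≤ t i) ∧ (∀ w, hi i = some w → t i < w)

/-- The set of queries reachable by RQ-DB-SKY: the query with `lo` and `hi` everywhere
`none` is reachable; and whenever a reachable query `q = (lo, hi)` has a nonempty answer
set, its `i`-th child is reachable, where the `i`-th child sets `lo` at every attribute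
`j < i` to `some ((f q) j)` and sets `hi` at attribute `i` to `some ((f q) i)`. -/
inductive RQReachable {α : Type*} [LinearOrder α] {m : ℕ}
    (D : Finset (Fin m → α))
    (f : (Fin m → Option α) × (Fin m → Option α) → (Fin m → α)) :
    (Fin m → Option α) × (Fin m → Option α) → Prop
  | root : RQReachable D f (fun _ => none, fun _ => none)
  | child (q : (Fin m → Option α) × (Fin m → Option α)) (i : Fin m) :
      RQReachable D f q →
      (∃ t ∈ D, RQMatches q.1 q.2 t) →
      RQReachable D f
        ((fun j => if j < i then some (f q j) else q.1 j),
         Function.update q.2 i (some (f q i)))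

/-- Completeness of RQ-DB-SKY: every skyline tuple of `D` is returned by some
reachable query. -/
theorem rq_db_sky_complete {α : Type*} [LinearOrder α] {m : ℕ} (hm : 1 ≤ m)
    (D : Finset (Fin m → α))
    (f : (Fin m → Option α) × (Fin m → Option α) → (Fin m → α))
    (hf : ∀ q : (Fin m → Option α) × (Fin m → Option α),
      (∃ t ∈ D, RQMatches q.1 q.2 t) →
      f q ∈ D ∧ RQMatches q.1 q.2 (f q) ∧
        ∀ u ∈ D, RQMatches q.1 q.2 u → ¬ Dominates u (f q))
    (t : Fin m → α) (htD : t ∈ D) (hsky : ∀ u ∈ D, ¬ Dominates u t) :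
    ∃ q, RQReachable D f q ∧ (∃ u ∈ D, RQMatches q.1 q.2 u) ∧ f q = t := by
  classical
  suffices h : ∀ n (q : (Fin m → Option α) × (Fin m → Option α)),
      RQReachable D f q → RQMatches q.1 q.2 t →
      (D.filter (fun u => RQMatches q.1 q.2 u)).card ≤ n →
      ∃ q', RQReachable D f q' ∧ (∃ u ∈ D, RQMatches q'.1 q'.2 u) ∧ f q' = t by
    have hroot : RQMatches (fun _ : Fin m => (none : Option α)) (fun _ => none) t := by
      intro i
      exact ⟨fun v hv => by simp at hv, fun w hw => by simp at hw⟩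
    exact h _ _ RQReachable.root hroot le_rfl
  intro n
  induction n with
  | zero =>
    intro q hq hmt hcard
    exfalso
    have ht : t ∈ D.filter (fun u => RQMatches q.1 q.2 u) :=
      Finset.mem_filter.mpr ⟨htD, hmt⟩
    have := Finset.card_pos.mpr ⟨t, ht⟩
    omega
  | succ n ih =>
    intro q hq hmt hcard
    have hne : ∃ u ∈ D, RQMatches q.1 q.2 u := ⟨t, htD, hmt⟩
    obtain ⟨hfD, hfm, _⟩ := hf q hne
    by_cases hft : f q = t
    · exact ⟨q, hq, hne, hft⟩
    · have hnd : ¬ Dominates (f q) t := hsky _ hfD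
      have hex : ∃ i, t i < f q i := by
        by_contra h'
        push_neg at h'
        exact hnd ⟨hft, fun i => h' i⟩
      set S := Finset.univ.filter (fun i => t i < f q i) with hS
      have hSne : S.Nonempty := ⟨hex.choose, by simp [hS, hex.choose_spec]⟩
      set i := S.min' hSne with hidef
      have hi : t i < f q i := by
        have := S.min'_mem hSne
        simpa [hS] using this
      have hjlt : ∀ j, j < i → f q j ≤ t j := by
        intro j hj
        by_contra h'
        push_neg at h'
        have hjS : j ∈ S := by simp [hS, h']
        exact absurd (S.min'_le j hjS) (not_le.mpr hj)
      set q' : (Fin m → Option α) × (Fin m → Option α) :=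
        ((fun j => if j < i then some (f q j) else q.1 j),
         Function.update q.2 i (some (f q i))) with hq'
      have hq'reach : RQReachable D f q' := RQReachable.child q i hq hne
      have hmt' : RQMatches q'.1 q'.2 t := by
        intro j
        constructor
        · intro v hv
          simp only [hq'] at hv
          by_cases hji : j < i
          · rw [if_pos hji] at hv
            injection hv with hv
            exact hv ▸ hjlt j hji
          · rw [if_neg hji] at hv
            exact (hmt j).1 v hv
        · intro w hw
          simp only [hq'] at hw
          by_cases hji : j = i
          · subst hji
            rw [Function.update_self] at hw
            injection hw with hw
            exact hw ▸ hi
          · rw [Function.update_of_ne hji] at hw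
            exact (hmt j).2 w hw
      have hsub : ∀ u, RQMatches q'.1 q'.2 u → RQMatches q.1 q.2 u := by
        intro u hu j
        constructor
        · intro v hv
          by_cases hji : j < i
          · have h1 := (hu j).1 (f q j) (by simp [hq', if_pos hji])
            have h2 := (hfm j).1 v hv
            exact h2.trans h1
          · exact (hu j).1 v (by simp [hq', if_neg hji, hv])
        · intro w hw
          by_cases hji : j = i
          · subst hji
            have h1 := (hu i).2 (f q i) (by simp [hq'])
            have h2 := (hfm i).2 w hw
            exact h1.trans h2
          · exact (hu j).2 w (by simp [hq', Function.update_of_ne hji, hw])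
      have hfq_not : ¬ RQMatches q'.1 q'.2 (f q) := by
        intro h
        exact absurd ((h i).2 (f q i) (by simp [hq'])) (lt_irrefl _)
      have hcard' : (D.filter (fun u => RQMatches q'.1 q'.2 u)).card <
          (D.filter (fun u => RQMatches q.1 q.2 u)).card := by
        apply Finset.card_lt_card
        rw [Finset.ssubset_iff_of_subset]
        · exact ⟨f q, Finset.mem_filter.mpr ⟨hfD, hfm⟩,
            fun hmem => hfq_not (Finset.mem_filter.mp hmem).2⟩
        · intro u hu
          rw [Finset.mem_filter] at hu ⊢
          exact ⟨hu.1, hsub u hu.2⟩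
      exact ih q' hq'reach hmt' (by omega)
end

section
/- Closed form of the average-case cost recurrence of SQ-DB-SKY: Let m ≥ 2 be an integer and define a : ℕ → ℚ by a 0 = 1 and, for every s ≥ 1, a s = 1 + (m / s) · Σ_{i=0}^{s−1} a i. Then for every s ≥ 0, a s = 1 + (m / (m − 1)) · (C(m + s − 1, s) − 1), where C(n, k) denotes the binomial coefficient. -/
/-!
Multiplying the recurrence by `s` and subtracting consecutive instances gives the first-order
recurrence `(s + 1) a (s + 1) = (s + m) a s + 1`, so `d s = (m - 1) a s + 1` satisfies
`(s + 1) d (s + 1) = (s + m) d s` with `d 0 = m`. The sequence `m * C(m + s - 1, s)` satisfies the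
same recurrence, and a recurrence of this shape determines a sequence from its initial term.
-/

open Finset

theorem Nat.add_one_mul_choose_add_one_eq_mul_choose_sub_one (n k : ℕ) :
    (k + 1) * n.choose (k + 1) = n * (n - 1).choose k := by
  cases n with
  | zero => simp
  | succ n => rw [Nat.add_one_sub_one, Nat.add_one_mul_choose_eq, mul_comm]

theorem eq_of_add_one_mul_eq {K : Type*} [Field K] [CharZero K] {x y : ℕ → K} (c : ℕ → K)
    (hx : ∀ s : ℕ, (s + 1) * x (s + 1) = c s * x s)
    (hy : ∀ s : ℕ, (s + 1) * y (s + 1) = c s * y s) (h0 : x 0 = y 0) : x = y := by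
  funext s
  induction s with
  | zero => exact h0
  | succ s ih =>
    refine mul_left_cancel₀ (Nat.cast_add_one_ne_zero s) ?_
    rw [hx, hy, ih]

section Recurrence

variable {m : ℕ} {a : ℕ → ℚ}

theorem cast_mul_eq_add_mul_sum
    (hrec : ∀ s : ℕ, 1 ≤ s → a s = 1 + ((m : ℚ) / (s : ℚ)) * ∑ i ∈ range s, a i)
    (s : ℕ) : s * a s = s + m * ∑ i ∈ range s, a i := by
  rcases Nat.eq_zero_or_pos s with rfl | hs
  · simp
  · rw [hrec s hs]
    field_simp

theorem add_one_mul_eq_add_mul_add_one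
    (hrec : ∀ s : ℕ, 1 ≤ s → a s = 1 + ((m : ℚ) / (s : ℚ)) * ∑ i ∈ range s, a i)
    (s : ℕ) : (s + 1) * a (s + 1) = (s + m) * a s + 1 := by
  have hs := cast_mul_eq_add_mul_sum hrec s
  have hs1 := cast_mul_eq_add_mul_sum hrec (s + 1)
  rw [sum_range_succ] at hs1
  push_cast at hs1
  linear_combination hs1 - hs

end Recurrence

/-- Closed form of the average-case cost recurrence of SQ-DB-SKY:
if `a 0 = 1` and `a s = 1 + (m/s) * ∑_{i<s} a i` for `s ≥ 1`, then
`a s = 1 + (m/(m-1)) * (C(m+s-1, s) - 1)`. -/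
theorem sq_avg_cost_closed_form (m : ℕ) (hm : 2 ≤ m) (a : ℕ → ℚ)
    (h0 : a 0 = 1)
    (hrec : ∀ s : ℕ, 1 ≤ s → a s = 1 + ((m : ℚ) / (s : ℚ)) * ∑ i ∈ Finset.range s, a i) :
    ∀ s : ℕ, a s = 1 + ((m : ℚ) / ((m : ℚ) - 1)) * (((m + s - 1).choose s : ℚ) - 1) := by
  have hm1 : (m : ℚ) - 1 ≠ 0 := by
    have : (2 : ℚ) ≤ m := by exact_mod_cast hm
    linarith
  have hscaled : (fun s ↦ ((m : ℚ) - 1) * a s + 1) = fun s ↦ m * ((m + s - 1).choose s : ℚ) := by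
    refine eq_of_add_one_mul_eq (fun s ↦ (s + m : ℚ)) (fun s ↦ ?_) (fun s ↦ ?_) (by simp [h0])
    · linear_combination ((m : ℚ) - 1) * add_one_mul_eq_add_mul_add_one hrec s
    · have hchoose : ((s : ℚ) + 1) * ((m + s).choose (s + 1) : ℚ)
          = ((m : ℚ) + s) * ((m + s - 1).choose s : ℚ) := by
        exact_mod_cast Nat.add_one_mul_choose_add_one_eq_mul_choose_sub_one (m + s) s
      rw [← add_assoc, Nat.add_one_sub_one]
      linear_combination (m : ℚ) * hchoose
  intro s
  have hs := congrFun hscaled s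
  field_simp
  linear_combination hs
end

section
/- Closed form of the majorizing recurrence: Let m ≥ 1 be an integer and define F : ℕ → ℚ by F 0 = 1 and, for every s ≥ 1, F s = ((m + 1) / s) · Σ_{i=0}^{s−1} F i. Then for every s ≥ 0, F s = C(s + m, m), where C(n, k) denotes the binomial coefficient. Equivalently, for s ≥ 1, Σ_{i=0}^{s−1} F i = ((s + m)/(m + 1)) · F_{s−1}. -/
lemma hockey_stick (m : ℕ) : ∀ s : ℕ,
    ∑ i ∈ Finset.range s, (i + m).choose m = (s + m).choose (m + 1) := by
  intro s
  induction s with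
  | zero => simp [Nat.choose_eq_zero_of_lt]
  | succ n ih =>
      rw [Finset.sum_range_succ, ih]
      have : n + 1 + m = (n + m) + 1 := by ring
      rw [this, Nat.choose_succ_succ]
      simp only [Nat.succ_eq_add_one]
      omega

/-- Closed form of the majorizing recurrence: if `F 0 = 1` and
`F s = ((m+1)/s) * ∑_{i<s} F i` for `s ≥ 1`, then `F s = C(s+m, m)`;
equivalently, for `s ≥ 1`, `∑_{i<s} F i = ((s+m)/(m+1)) * F (s-1)`. -/
theorem majorizing_recurrence_closed_form (m : ℕ) (hm : 1 ≤ m) (F : ℕ → ℚ)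
    (h0 : F 0 = 1)
    (hrec : ∀ s : ℕ, 1 ≤ s →
      F s = (((m : ℚ) + 1) / (s : ℚ)) * ∑ i ∈ Finset.range s, F i) :
    (∀ s : ℕ, F s = ((s + m).choose m : ℚ)) ∧
    (∀ s : ℕ, 1 ≤ s →
      ∑ i ∈ Finset.range s, F i = (((s : ℚ) + m) / ((m : ℚ) + 1)) * F (s - 1)) := by
  have hF : ∀ s : ℕ, F s = ((s + m).choose m : ℚ) := by
    intro s
    induction s using Nat.strong_induction_on with
    | _ s ih =>
      rcases Nat.eq_zero_or_pos s with hs | hs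
      · subst hs; simpa using h0
      · have hs0 : (s : ℚ) ≠ 0 := by positivity
        have hsum : ∑ i ∈ Finset.range s, F i = ((s + m).choose (m + 1) : ℚ) := by
          rw [← hockey_stick m s]
          push_cast
          exact Finset.sum_congr rfl fun i hi => ih i (Finset.mem_range.mp hi)
        rw [hrec s hs, hsum]
        have key : (s + m).choose (m + 1) * (m + 1) = (s + m).choose m * s := by
          have := Nat.choose_succ_right_eq (s + m) m
          simpa [Nat.add_sub_cancel] using this
        have keyQ : ((s + m).choose (m + 1) : ℚ) * (m + 1) = ((s + m).choose m : ℚ) * s := by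
          exact_mod_cast congrArg (Nat.cast : ℕ → ℚ) key
        field_simp
        linarith [keyQ]
  refine ⟨hF, fun s hs => ?_⟩
  have hsum : ∑ i ∈ Finset.range s, F i = ((s + m).choose (m + 1) : ℚ) := by
    rw [← hockey_stick m s]
    push_cast
    exact Finset.sum_congr rfl fun i _ => hF i
  rw [hsum, hF (s - 1)]
  have key : (s + m) * (s - 1 + m).choose m = (s + m).choose (m + 1) * (m + 1) := by
    have := Nat.add_one_mul_choose_eq (s - 1 + m) m
    have h1 : (s - 1 + m) + 1 = s + m := by omega
    rw [h1] at this
    exact this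
  have keyQ : ((s : ℚ) + m) * ((s - 1 + m).choose m : ℚ)
      = ((s + m).choose (m + 1) : ℚ) * (m + 1) := by
    exact_mod_cast congrArg (Nat.cast : ℕ → ℚ) key
  have hm1 : (m : ℚ) + 1 ≠ 0 := by positivity
  field_simp
  linarith [keyQ]
end

section
/- Binomial upper bound for the average-case cost recurrence: Let m ≥ 1 be an integer and define a : ℕ → ℚ by a 0 = 1 and, for every s ≥ 1, a s = 1 + (m / s) · Σ_{i=0}^{s−1} a i. Then for every s ≥ 0, a s ≤ C(s + m, m), where C(n, k) denotes the binomial coefficient. -/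
/-- Hockey stick identity in the needed form. -/
lemma sq_hockey (m : ℕ) : ∀ s : ℕ,
    ∑ i ∈ Finset.range s, ((i + m).choose m) = (s + m).choose (m + 1) := by
  intro s
  induction s with
  | zero => simp [Nat.choose_eq_zero_of_lt (Nat.lt_succ_self m)]
  | succ n ih =>
    rw [Finset.sum_range_succ, ih, show n + 1 + m = (n + m) + 1 by ring,
      Nat.choose_succ_succ (n + m) m]
    simp only [Nat.succ_eq_add_one]
    omega

/-- Binomial upper bound for the average-case cost recurrence of SQ-DB-SKY:
if `a 0 = 1` and `a s = 1 + (m/s) * ∑_{i<s} a i` for `s ≥ 1`, then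
`a s ≤ C(s+m, m)`. -/
theorem sq_avg_cost_binomial_bound (m : ℕ) (hm : 1 ≤ m) (a : ℕ → ℚ)
    (h0 : a 0 = 1)
    (hrec : ∀ s : ℕ, 1 ≤ s → a s = 1 + ((m : ℚ) / (s : ℚ)) * ∑ i ∈ Finset.range s, a i) :
    ∀ s : ℕ, a s ≤ ((s + m).choose m : ℚ) := by
  intro s
  induction s using Nat.strong_induction_on with
  | _ s ih =>
    rcases Nat.eq_zero_or_pos s with hs | hs
    · subst hs; rw [h0]; simp
    · set F : ℚ := ((s + m).choose m : ℚ) with hFdef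
      set K : ℚ := ((s + m).choose (m + 1) : ℚ) with hKdef
      have hs' : (0 : ℚ) < s := by exact_mod_cast hs
      have hsum : ∑ i ∈ Finset.range s, a i ≤ K := by
        calc ∑ i ∈ Finset.range s, a i
            ≤ ∑ i ∈ Finset.range s, (((i + m).choose m : ℕ) : ℚ) :=
              Finset.sum_le_sum (fun i hi => ih i (Finset.mem_range.mp hi))
          _ = K := by rw [hKdef]; exact_mod_cast congrArg (Nat.cast (R := ℚ)) (sq_hockey m s)
      have hK : K * (m + 1) = F * s := by
        have h1 := Nat.choose_succ_right_eq (s + m) m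
        have h2 : s + m - m = s := by omega
        rw [h2] at h1
        rw [hFdef, hKdef]
        exact_mod_cast h1
      have hF : (m : ℚ) + 1 ≤ F := by
        have h3 : m + 1 ≤ (s + m).choose m := by
          calc m + 1 = (m + 1).choose m := (Nat.choose_succ_self_right m).symm
            _ ≤ (s + m).choose m := Nat.choose_le_choose m (by omega)
        rw [hFdef]
        exact_mod_cast h3
      have hms : (0 : ℚ) ≤ (m : ℚ) / s := by positivity
      have step1 : a s ≤ 1 + (m : ℚ) / s * K := by
        rw [hrec s hs]
        have := mul_le_mul_of_nonneg_left hsum hms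
        linarith
      have step2 : 1 + (m : ℚ) / s * K ≤ F := by
        rw [div_mul_eq_mul_div, ← le_sub_iff_add_le', div_le_iff₀ hs']
        have h2 : (m : ℚ) * (K * (m + 1)) = m * (F * s) := by rw [hK]
        have h1 : (s : ℚ) * (m + 1) ≤ F * s := by nlinarith
        nlinarith [hm]
      linarith
end

section
/- Average-case query cost bound for SQ-DB-SKY: Let m ≥ 1 be an integer and define a : ℕ → ℚ by a 0 = 1 and, for every s ≥ 1, a s = 1 + (m / s) · Σ_{i=0}^{s−1} a i. Then for every s ≥ 0, the real number a s satisfies a s ≤ (e + e·s/m)^m, where e is Euler's number. -/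
/-!
Induction shows that `a s ≤ (s + m).choose m`: by the hockey-stick identity the binomial
coefficients satisfy the recurrence with `≤` in place of `=`, since
`s * (s + m).choose m = (m + 1) * (s + m).choose (m + 1)` and `s ≤ (s + m).choose (m + 1)`.
The exponential bound then follows from `n.choose k ≤ n ^ k / k!` and `k ^ k / k! ≤ e ^ k`,
the `k`-th term of the series of `e ^ k`.
-/

open Finset Nat

namespace Nat

theorem sum_range_add_choose' (s m : ℕ) :
    ∑ i ∈ range s, (i + m).choose m = (s + m).choose (m + 1) := by
  cases s with
  | zero => simp
  | succ t => rw [sum_range_add_choose, Nat.add_right_comm]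

theorem le_add_choose_succ (s m : ℕ) : s ≤ (s + m).choose (m + 1) := by
  cases s with
  | zero => exact Nat.zero_le _
  | succ t =>
    rw [choose_symm_of_eq_add (by omega : t + 1 + m = m + 1 + t)]
    calc t + 1 = (t + 1).choose t := (choose_succ_self_right t).symm
      _ ≤ (t + 1 + m).choose t := choose_le_choose t (by omega)

theorem add_mul_choose_succ_le_mul_choose (s m : ℕ) :
    s + m * (s + m).choose (m + 1) ≤ s * (s + m).choose m := by
  have h := choose_succ_right_eq (s + m) m
  rw [Nat.add_sub_cancel] at h
  nlinarith [le_add_choose_succ s m]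

theorem choose_le_exp_mul_div_pow (n k : ℕ) :
    (n.choose k : ℝ) ≤ (Real.exp 1 * n / k) ^ k := by
  have hk : (0 : ℝ) < (k : ℝ) ^ k := mod_cast Nat.pow_self_pos
  have hfact : (k : ℝ) ^ k / k ! ≤ Real.exp 1 ^ k := by
    simpa [← Real.exp_nat_mul] using Real.pow_div_factorial_le_exp k k.cast_nonneg k
  calc (n.choose k : ℝ) ≤ n ^ k / k ! := Nat.choose_le_pow_div k n
    _ = n ^ k / k ^ k * (k ^ k / k !) := by field_simp
    _ ≤ n ^ k / k ^ k * Real.exp 1 ^ k := by gcongr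
    _ = (Real.exp 1 * n / k) ^ k := by rw [div_pow, mul_pow]; ring

end Nat

section Recurrence

variable {K : Type*} [Field K] [LinearOrder K] [IsStrictOrderedRing K]

theorem le_add_choose_of_le_recurrence {m : ℕ} {a : ℕ → K} (h0 : a 0 ≤ 1)
    (hrec : ∀ s : ℕ, 1 ≤ s → a s ≤ 1 + (m / s) * ∑ i ∈ range s, a i) (s : ℕ) :
    a s ≤ (s + m).choose m := by
  induction s using Nat.strong_induction_on with
  | _ s ih =>
    rcases Nat.eq_zero_or_pos s with rfl | hs
    · simpa using h0
    have hsum : ∑ i ∈ range s, a i ≤ (s + m).choose (m + 1) := by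
      rw [← Nat.sum_range_add_choose', Nat.cast_sum]
      exact sum_le_sum fun i hi => ih i (mem_range.mp hi)
    have hs' : (0 : K) < s := mod_cast hs
    have hsuper : (s : K) + m * (s + m).choose (m + 1) ≤ s * (s + m).choose m :=
      mod_cast Nat.add_mul_choose_succ_le_mul_choose s m
    calc a s ≤ 1 + (m / s) * ∑ i ∈ range s, a i := hrec s hs
      _ ≤ 1 + (m / s) * (s + m).choose (m + 1) := by gcongr
      _ = (s + m * (s + m).choose (m + 1)) / s := by field_simp
      _ ≤ (s + m).choose m := by rw [div_le_iff₀ hs']; linarith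

end Recurrence

/-- Average-case query cost bound for SQ-DB-SKY: if `a 0 = 1` and
`a s = 1 + (m/s) * ∑_{i<s} a i` for `s ≥ 1`, then, as a real number,
`a s ≤ (e + e·s/m)^m`. -/
theorem sq_avg_cost_exp_bound (m : ℕ) (hm : 1 ≤ m) (a : ℕ → ℚ)
    (h0 : a 0 = 1)
    (hrec : ∀ s : ℕ, 1 ≤ s → a s = 1 + ((m : ℚ) / (s : ℚ)) * ∑ i ∈ Finset.range s, a i) :
    ∀ s : ℕ, ((a s : ℝ)) ≤ (Real.exp 1 + Real.exp 1 * s / m) ^ m := by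
  intro s
  have hm' : (m : ℝ) ≠ 0 := Nat.cast_ne_zero.mpr (by omega)
  have hbinom : a s ≤ (s + m).choose m :=
    le_add_choose_of_le_recurrence h0.le (fun s hs => (hrec s hs).le) s
  calc (a s : ℝ) ≤ ((s + m).choose m : ℕ) := mod_cast hbinom
    _ ≤ (Real.exp 1 * ↑(s + m) / m) ^ m := Nat.choose_le_exp_mul_div_pow _ _
    _ = (Real.exp 1 + Real.exp 1 * s / m) ^ m := by congr 1; push_cast; field_simp; ring
end

section
/- Query cost bounds for 2D point-query skyline discovery: Let s ≥ 0 and let x, y : Fin (s + 2) → ℕ with x strictly increasing, y strictly decreasing, x 0 = 0 and y (s + 1) = 0. Define C = Σ_{i=0}^{s} min( x (i+1) − x i , y i − y (i+1) ). Then for every index i ∈ Fin (s + 2), C ≤ x i + y i. In particular C ≤ x (s + 1) and C ≤ y 0. -/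
/-!
Split the cost sum at the index `i`: bound each term before `i` by its `x`-increment and each
term from `i` on by its `y`-decrement. Both parts telescope, to `x i - x 0 = x i` and to
`y i - y (s + 1) = y i`.
-/

open Finset

lemma Finset.sum_Ico_tsub_of_antitone {M : Type*} [AddCommMonoid M] [PartialOrder M]
    [CanonicallyOrderedAdd M] [Sub M] [OrderedSub M] {f : ℕ → M} (hf : Antitone f) {m n : ℕ}
    (hmn : m ≤ n) :
    ∑ j ∈ Ico m n, (f j - f (j + 1)) = f m - f n := by
  induction n, hmn using Nat.le_induction with
  | base => rw [Ico_self, sum_empty, tsub_self]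
  | succ n hmn ih =>
    rw [sum_Ico_succ_top hmn, ih, tsub_add_tsub_cancel (hf hmn) (hf n.le_succ)]

lemma Finset.sum_range_min_le_sum_range_add_sum_Ico {M : Type*} [AddCommMonoid M]
    [LinearOrder M] [IsOrderedAddMonoid M] (a b : ℕ → M) {i n : ℕ} (hin : i ≤ n) :
    ∑ j ∈ range n, min (a j) (b j) ≤ ∑ j ∈ range i, a j + ∑ j ∈ Ico i n, b j := by
  rw [← sum_range_add_sum_Ico _ hin]
  gcongr
  · exact min_le_left _ _
  · exact min_le_right _ _

lemma sum_range_min_tsub_le {M : Type*} [AddCommMonoid M] [LinearOrder M]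
    [IsOrderedAddMonoid M] [CanonicallyOrderedAdd M] [Sub M] [OrderedSub M] [AddLeftReflectLE M]
    {X Y : ℕ → M} (hX : Monotone X) (hY : Antitone Y) {i n : ℕ} (hin : i ≤ n) :
    ∑ j ∈ range n, min (X (j + 1) - X j) (Y j - Y (j + 1)) ≤ (X i - X 0) + (Y i - Y n) := by
  calc _ ≤ ∑ j ∈ range i, (X (j + 1) - X j) + ∑ j ∈ Ico i n, (Y j - Y (j + 1)) :=
        sum_range_min_le_sum_range_add_sum_Ico _ _ hin
    _ = (X i - X 0) + (Y i - Y n) := by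
      rw [sum_range_tsub hX, sum_Ico_tsub_of_antitone hY hin]

lemma Fin.sum_min_tsub_le {M : Type*} [AddCommMonoid M] [LinearOrder M]
    [IsOrderedAddMonoid M] [CanonicallyOrderedAdd M] [Sub M] [OrderedSub M] [AddLeftReflectLE M]
    {n : ℕ} {x y : Fin (n + 1) → M} (hx : Monotone x) (hy : Antitone y) (i : Fin (n + 1)) :
    ∑ j : Fin n, min (x j.succ - x j.castSucc) (y j.castSucc - y j.succ) ≤
      (x i - x 0) + (y i - y (Fin.last n)) := by
  set X : ℕ → M := fun k ↦ x (Fin.clamp k n)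
  set Y : ℕ → M := fun k ↦ y (Fin.clamp k n)
  have hclamp (k : Fin (n + 1)) : Fin.clamp k n = k := by ext; simp; omega
  have hX (k : Fin (n + 1)) : x k = X k := congrArg x (hclamp k).symm
  have hY (k : Fin (n + 1)) : y k = Y k := congrArg y (hclamp k).symm
  calc ∑ j : Fin n, min (x j.succ - x j.castSucc) (y j.castSucc - y j.succ)
      = ∑ j ∈ range n, min (X (j + 1) - X j) (Y j - Y (j + 1)) := by
        rw [← Fin.sum_univ_eq_sum_range]
        refine sum_congr rfl fun j _ ↦ ?_
        rw [hX j.succ, hX j.castSucc, hY j.succ, hY j.castSucc]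
        rfl
    _ ≤ (X i - X 0) + (Y i - Y n) :=
        sum_range_min_tsub_le (hx.comp Fin.clamp_monotone)
          (hy.comp_monotone Fin.clamp_monotone) (Nat.lt_succ_iff.mp i.is_lt)
    _ = (x i - x 0) + (y i - y (Fin.last n)) := by
        rw [hX i, hX 0, hY i, hY (Fin.last n)]
        rfl

/-- Query cost bounds for 2D point-query skyline discovery (PQ-2D-SKY):
given skyline points `(x i, y i)` sorted increasingly on `x` and decreasingly on `y`,
padded with corner points so that `x 0 = 0` and `y (s+1) = 0`, the cost
`C = ∑_{i=0}^{s} min(x(i+1) − x i, y i − y(i+1))` satisfies `C ≤ x i + y i` for every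
index `i`; in particular `C ≤ x (s+1)` and `C ≤ y 0`. -/
theorem pq2d_cost_bounds (s : ℕ) (x y : Fin (s + 2) → ℕ)
    (hx : StrictMono x) (hy : StrictAnti y)
    (hx0 : x 0 = 0) (hyl : y (Fin.last (s + 1)) = 0) :
    (∀ i : Fin (s + 2),
      (∑ j : Fin (s + 1), min (x j.succ - x j.castSucc) (y j.castSucc - y j.succ))
        ≤ x i + y i) ∧
    (∑ j : Fin (s + 1), min (x j.succ - x j.castSucc) (y j.castSucc - y j.succ))
      ≤ x (Fin.last (s + 1)) ∧
    (∑ j : Fin (s + 1), min (x j.succ - x j.castSucc) (y j.castSucc - y j.succ))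
      ≤ y 0 := by
  have key (i : Fin (s + 2)) :
      ∑ j : Fin (s + 1), min (x j.succ - x j.castSucc) (y j.castSucc - y j.succ) ≤ x i + y i := by
    simpa only [hx0, hyl, tsub_zero] using Fin.sum_min_tsub_le hx.monotone hy.antitone i
  exact ⟨key, by simpa [hyl] using key (Fin.last _), by simpa [hx0] using key 0⟩
end

section
/- Sky band structure lemma: Let α be a linear order, m ≥ 1, and D a finite set of tuples in (Fin m → α). Suppose t ∈ D is dominated by exactly h tuples of D, where h ≥ 1. Then there exists u ∈ D such that (i) u dominates t, (ii) u is dominated by at most h − 1 tuples of D (i.e., u lies on the top-h sky band of D), and (iii) t is a skyline tuple of the domination subspace of u, i.e., no tuple w ∈ D that is dominated by u dominates t. -/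
instance {α : Type*} [LinearOrder α] {m : ℕ} (t' t : Fin m → α) :
    Decidable (Dominates t' t) := by
  unfold Dominates; infer_instance

theorem dominates_iff_lt {α : Type*} [LinearOrder α] {m : ℕ} (t' t : Fin m → α) :
    Dominates t' t ↔ t' < t := by
  rw [lt_iff_le_and_ne, Dominates, Pi.le_def, and_comm]

namespace Finset

variable {β : Type*} [Preorder β] [DecidableLT β] {D : Finset β} {u t : β}

theorem card_filter_lt_lt_of_lt (hu : u ∈ D) (hut : u < t) :
    #(D.filter (· < u)) < #(D.filter (· < t)) := by
  refine card_lt_card ⟨fun w hw ↦ ?_, fun hsub ↦ ?_⟩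
  · simp only [mem_filter] at hw ⊢
    exact ⟨hw.1, hw.2.trans hut⟩
  · exact lt_irrefl u (mem_filter.mp (hsub (mem_filter.mpr ⟨hu, hut⟩))).2

theorem exists_lt_forall_not_lt_lt (hne : (D.filter (· < t)).Nonempty) :
    ∃ u ∈ D, u < t ∧ ∀ w ∈ D, u < w → ¬ w < t := by
  obtain ⟨u, huS, hmax⟩ := (D.filter (· < t)).exists_maximal hne
  obtain ⟨huD, hut⟩ := mem_filter.mp huS
  refine ⟨u, huD, hut, fun w hwD huw hwt ↦ ?_⟩
  exact huw.not_ge (hmax (mem_filter.mpr ⟨hwD, hwt⟩) huw.le)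

end Finset

theorem sky_band_structure_general {α : Type*} [LinearOrder α] {m : ℕ}
    (D : Finset (Fin m → α)) (t : Fin m → α) (h : ℕ) (hh : 1 ≤ h)
    (hdom : (D.filter (fun u => Dominates u t)).card = h) :
    ∃ u ∈ D, Dominates u t ∧
      (D.filter (fun w => Dominates w u)).card ≤ h - 1 ∧
      ∀ w ∈ D, Dominates u w → ¬ Dominates w t := by
  classical
  simp only [dominates_iff_lt] at hdom ⊢
  obtain ⟨u, huD, hut, hbetween⟩ :=
    Finset.exists_lt_forall_not_lt_lt (Finset.card_pos.mp (hdom ▸ hh))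
  have hcard := Finset.card_filter_lt_lt_of_lt huD hut
  exact ⟨u, huD, hut, by omega, hbetween⟩

/-- Sky band structure lemma: if `t ∈ D` is dominated by exactly `h ≥ 1` tuples of `D`,
then there is a tuple `u ∈ D` dominating `t` which itself is dominated by at most
`h − 1` tuples of `D` (i.e. `u` is on the top-`h` sky band), and `t` is a skyline tuple
of the domination subspace of `u`: no tuple of `D` dominated by `u` dominates `t`. -/
theorem sky_band_structure {α : Type*} [LinearOrder α] {m : ℕ} (hm : 1 ≤ m)
    (D : Finset (Fin m → α)) (t : Fin m → α) (ht : t ∈ D) (h : ℕ) (hh : 1 ≤ h)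
    (hdom : (D.filter (fun u => Dominates u t)).card = h) :
    ∃ u ∈ D, Dominates u t ∧
      (D.filter (fun w => Dominates w u)).card ≤ h - 1 ∧
      ∀ w ∈ D, Dominates u w → ¬ Dominates w t :=
  sky_band_structure_general D t h hh hdom
end

section
/- Range-domination of skyline tuples missed by range-only discovery: Let α be a linear order, m ≥ 1, D a finite set of tuples in (Fin m → α), and R ⊆ Fin m a set of (range) attributes; call the attributes outside R point attributes. Say t' R-dominates t if t' i ≤ t i for every i ∈ R and t' i < t i for at least one i ∈ R. Suppose t ∈ D is a skyline tuple of D (with respect to all m attributes) but some element of D R-dominates t. Then there exists t' ∈ D such that (i) t' R-dominates t, (ii) no element of D R-dominates t' (so t' is a skyline tuple with respect to the range attributes alone), and (iii) there exists a point attribute i ∉ R with t i < t' i. -/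
/-- `t'` R-dominates `t`: `t'` is at least as good (≤) on every range attribute in `R`
and strictly better (<) on at least one attribute of `R`. -/
def RDominates {α : Type*} [LinearOrder α] {m : ℕ} (R : Set (Fin m))
    (t' t : Fin m → α) : Prop :=
  (∀ i ∈ R, t' i ≤ t i) ∧ ∃ i ∈ R, t' i < t i

/-- Range-domination of skyline tuples missed by range-only discovery: if `t` is a
skyline tuple of `D` (over all attributes) yet some tuple of `D` R-dominates `t`,
then there is `t' ∈ D` that R-dominates `t`, is itself R-dominated by no tuple of `D`
(hence is on the skyline of the range attributes alone), and is strictly surpassed by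
`t` on at least one point attribute `i ∉ R`. -/
theorem range_domination_property {α : Type*} [LinearOrder α] {m : ℕ} (hm : 1 ≤ m)
    (D : Finset (Fin m → α)) (R : Set (Fin m))
    (t : Fin m → α) (ht : t ∈ D)
    (hsky : ∀ u ∈ D, ¬ Dominates u t)
    (hmiss : ∃ u ∈ D, RDominates R u t) :
    ∃ t' ∈ D, RDominates R t' t ∧ (∀ u ∈ D, ¬ RDominates R u t') ∧
      ∃ i, i ∉ R ∧ t i < t' i := by
  classical
  obtain ⟨u0, hu0D, hu0⟩ := hmiss
  have htrans : ∀ a b c : Fin m → α,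
      RDominates R a b → RDominates R b c → RDominates R a c := by
    rintro a b c ⟨hab, _, _, _⟩ ⟨hbc, j, hjR, hbc'⟩
    exact ⟨fun k hk => (hab k hk).trans (hbc k hk), j, hjR, lt_of_le_of_lt (hab j hjR) hbc'⟩
  set S : Finset (Fin m → α) := D.filter (fun u => RDominates R u t) with hS
  have hu0S : u0 ∈ S := by simp [hS, hu0D, hu0]
  let r : {x // x ∈ S} → {x // x ∈ S} → Prop := fun a b => RDominates R a.1 b.1
  haveI : IsTrans {x // x ∈ S} r := ⟨fun a b c => htrans a.1 b.1 c.1⟩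
  haveI : IsIrrefl {x // x ∈ S} r := ⟨fun a h => lt_irrefl _ h.2.choose_spec.2⟩
  have hwf : WellFounded r := Finite.wellFounded_of_trans_of_irrefl r
  obtain ⟨⟨t', ht'S⟩, -, hmin⟩ := hwf.has_min Set.univ ⟨⟨u0, hu0S⟩, trivial⟩
  obtain ⟨ht'D, ht'dom⟩ : t' ∈ D ∧ RDominates R t' t := by
    simpa [hS] using ht'S
  refine ⟨t', ht'D, ht'dom, ?_, ?_⟩
  · intro u huD hu
    have huS : u ∈ S := by
      simp [hS, huD, htrans u t' t hu ht'dom]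
    exact hmin ⟨u, huS⟩ trivial hu
  · have hne : t' ≠ t := by
      obtain ⟨i, hiR, hlt⟩ := ht'dom.2
      intro h; rw [h] at hlt; exact lt_irrefl _ hlt
    have hnot : ¬ ∀ i, t' i ≤ t i := fun h => hsky t' ht'D ⟨hne, h⟩
    push_neg at hnot
    obtain ⟨i, hi⟩ := hnot
    exact ⟨i, fun hiR => (ht'dom.1 i hiR).not_gt hi, hi⟩
end
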